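/- arXiv:1705.10277 — 13 statements merged into one kernel-verified Lean document; each statement's English description precedes it below -/
import Mathlib

section
/- Let x, y, w, r be nonempty words with w = xr = ry and |x| < |r| (i.e., the two occurrences of r in w overlap). Then there exists a nonempty word r' such that w = x'r' = r'y' with |r'| < |x'|, and y' and y start with the same letter. -/
/-!
If `x ++ r = r ++ y` and `x` is no longer than `r`, then `r = x ++ r₁` with `x ++ r₁ = r₁ ++ y`.
Peeling off copies of `x` in this way, `r = x ++ ⋯ ++ x ++ s` with `0 < |s| ≤ |x|`, and
`w = x ++ r` ends in `s ++ y ++ ⋯ ++ y`. This `s` is the required border: it is short because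
`|s| ≤ |x| < |r| ≤ |w| - |s|`, and the word following it starts with `y`.
-/

namespace List

variable {α : Type*}

theorem exists_eq_append_of_append_eq_append_of_length_le {x y r : List α}
    (h : x ++ r = r ++ y) (hle : x.length ≤ r.length) :
    ∃ r₁, r = x ++ r₁ ∧ x ++ r₁ = r₁ ++ y := by
  rcases append_eq_append_iff.mp h with ⟨r₁, hr, hr'⟩ | ⟨c, hx, rfl⟩
  · exact ⟨r₁, hr, hr ▸ hr'⟩
  · have hc : c = [] := by
      rw [← length_eq_zero_iff]
      simpa [hx] using hle
    subst hc
    simp_all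

theorem exists_border_le_of_append_eq_append {x y r : List α}
    (hx : x ≠ []) (hr : r ≠ []) (h : x ++ r = r ++ y) :
    ∃ s t v, s ≠ [] ∧ s.length ≤ x.length ∧ x ++ r = t ++ s ∧ x ++ r = s ++ (y ++ v) := by
  by_cases hle : r.length ≤ x.length
  · exact ⟨r, x, [], hr, hle, rfl, by simpa using h⟩
  obtain ⟨r₁, rfl, h₁⟩ := exists_eq_append_of_append_eq_append_of_length_le h (by omega)
  have hr₁ : r₁ ≠ [] := by
    rintro rfl
    simp at hle
  obtain ⟨s, t, v, hs, hsx, hts, hsv⟩ := exists_border_le_of_append_eq_append hx hr₁ h₁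
  refine ⟨s, x ++ t, v ++ y, hs, hsx, by rw [append_assoc, hts], ?_⟩
  rw [h, hsv]
  simp
termination_by r.length
decreasing_by subst_vars; simpa using length_pos_iff.mpr hx

end List

theorem stmt1_general {α : Type*} (x y w r : List α)
    (hx : x ≠ []) (hy : y ≠ []) (hr : r ≠ [])
    (h1 : w = x ++ r) (h2 : w = r ++ y) (hlt : x.length < r.length) :
    ∃ r' x' y' : List α, r' ≠ [] ∧ w = x' ++ r' ∧ w = r' ++ y' ∧
      r'.length < x'.length ∧ y'.head? = y.head? := by
  subst h1
  obtain ⟨s, t, v, hs, hsx, hts, hsv⟩ := List.exists_border_le_of_append_eq_append hx hr h2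
  have hlen := congrArg List.length hts
  simp only [List.length_append] at hlen
  refine ⟨s, t, y ++ v, hs, hts, hsv, by omega, ?_⟩
  obtain ⟨a, y, rfl⟩ := List.exists_cons_of_ne_nil hy
  rfl

theorem stmt1 {α : Type*} (x y w r : List α)
    (hx : x ≠ []) (hy : y ≠ []) (hw : w ≠ []) (hr : r ≠ [])
    (h1 : w = x ++ r) (h2 : w = r ++ y) (hlt : x.length < r.length) :
    ∃ r' x' y' : List α, r' ≠ [] ∧ w = x' ++ r' ∧ w = r' ++ y' ∧
      r'.length < x'.length ∧ y'.head? = y.head? :=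
  stmt1_general x y w r hx hy hr h1 h2 hlt
end

section
/- Every nonempty prefix of an inverse Lyndon word is an inverse Lyndon word. -/
/-
If `p` is a prefix of `w = p ++ t` and `s` a proper nonempty suffix of `p`, then `s ++ t` is a
proper nonempty suffix of `w`, so `s ++ t ≺ p ++ t`. Since `s` is strictly shorter than `p`, the
first difference between `s ++ t` and `p ++ t` lies within `s` (or `s` is a proper prefix of
`p`), hence `s ≺ p`.
-/

def LexLt {α : Type*} [LinearOrder α] (x y : List α) : Prop :=
  List.Lex (· < ·) x y

def IsInvLyndonWord {α : Type*} [LinearOrder α] (w : List α) : Prop :=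
  w ≠ [] ∧ ∀ s : List α, s <:+ w → s ≠ w → s ≠ [] → LexLt s w

theorem List.Lex.of_append_of_length_lt {α : Type*} {r : α → α → Prop} :
    ∀ {s p : List α} (t t' : List α), s.length < p.length →
      List.Lex r (s ++ t) (p ++ t') → List.Lex r s p
  | [], _ :: _, _, _, _, _ => .nil
  | _ :: _, _ :: _, _, _, _, .rel h => .rel h
  | _ :: _, _ :: _, t, t', hlen, .cons h =>
    .cons (of_append_of_length_lt t t' (Nat.succ_lt_succ_iff.mp hlen) h)

theorem stmt2 {α : Type*} [LinearOrder α] (w p : List α)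
    (hw : IsInvLyndonWord w) (hp : p ≠ []) (hpw : p <+: w) :
    IsInvLyndonWord p := by
  obtain ⟨t, rfl⟩ := hpw
  refine ⟨hp, fun s hs hsp hsne => ?_⟩
  have hlen : s.length < p.length :=
    lt_of_le_of_ne hs.length_le fun h => hsp (hs.eq_of_length h)
  obtain ⟨u, rfl⟩ := hs
  have hsuffix : s ++ t <:+ u ++ s ++ t := ⟨u, (List.append_assoc u s t).symm⟩
  have hproper : s ++ t ≠ u ++ s ++ t := fun h => hsp (List.append_cancel_right h)
  exact (hw.2 (s ++ t) hsuffix hproper (by simp [hsne])).of_append_of_length_lt t t hlen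
end

section
/- If a nonempty word w is not an inverse Lyndon word, then there exists a nonempty proper prefix p of w, with w = ps, such that p ≪ s. -/
def LexLl {α : Type*} [LinearOrder α] (x y : List α) : Prop :=
  LexLt x y ∧ ¬ (x <+: y ∧ x ≠ y)

/-!
Let `s` be a suffix of `w = p ++ s` with `w < s`; such an `s` exists whenever `w` is not an
inverse Lyndon word. If `p` is not a prefix of `s`, then `p ≪ s`, because `s ≤ p` would give
`s ≤ p ++ s = w`. Otherwise `s = p ++ t`, and cancelling `p` in `p ++ s < p ++ t` gives
`w < s < t`, so the strictly shorter suffix `t` has the same property and we descend.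
-/

section

variable {α : Type*} [LinearOrder α]

theorem List.lt_of_append_lt_append_left {p s t : List α} (h : p ++ s < p ++ t) : s < t :=
  List.not_le.mp fun hts => List.append_left_le hts h

theorem exists_suffix_gt_of_not_isInvLyndonWord {w : List α} (hw : w ≠ [])
    (h : ¬ IsInvLyndonWord w) : ∃ s, s <:+ w ∧ w < s := by
  simp only [IsInvLyndonWord, LexLt, List.lex_lt, not_and, not_forall, List.not_lt] at h
  obtain ⟨s, hs, hsw, -, hws⟩ := h hw
  exact ⟨s, hs, (List.le_iff_lt_or_eq.mp hws).resolve_right (Ne.symm hsw)⟩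

theorem exists_lexLl_split_of_suffix_gt {w s : List α} (hs : s <:+ w) (hws : w < s) :
    ∃ p s' : List α, p ≠ [] ∧ s' ≠ [] ∧ w = p ++ s' ∧ LexLl p s' := by
  obtain ⟨p, rfl⟩ := hs
  have hp : p ≠ [] := by
    rintro rfl
    exact List.lt_irrefl s hws
  by_cases hpre : p <+: s
  · obtain ⟨t, rfl⟩ := hpre
    have hst : p ++ t < t := List.lt_of_append_lt_append_left hws
    have : t.length < (p ++ t).length := by
      simpa [List.length_pos_iff] using hp
    exact exists_lexLl_split_of_suffix_gt ((List.suffix_append p t).trans (List.suffix_append p _))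
      (List.lt_trans hws hst)
  · have hps : p < s := List.not_le.mp fun hsp =>
      List.le_trans hsp List.le_append_left hws
    refine ⟨p, s, hp, ?_, rfl, hps, fun h => hpre h.1⟩
    rintro rfl
    exact List.not_lt_nil _ hws
termination_by s.length

end

theorem stmt4 {α : Type*} [LinearOrder α] (w : List α)
    (hw : w ≠ []) (h : ¬ IsInvLyndonWord w) :
    ∃ p s : List α, p ≠ [] ∧ s ≠ [] ∧ w = p ++ s ∧ LexLl p s := by
  obtain ⟨s, hs, hws⟩ := exists_suffix_gt_of_not_isInvLyndonWord hw h
  exact exists_lexLl_split_of_suffix_gt hs hws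
end

section
/- If a nonempty word w is not an inverse Lyndon word, then there exists a nonempty proper prefix p of w, with w = ps, such that p is an inverse Lyndon word and p ≪ s. -/
section
variable {α : Type*} [LinearOrder α]

theorem lexLt_iff_lt {x y : List α} : LexLt x y ↔ x < y := Iff.rfl

theorem List.strictMono_append_left (p : List α) : StrictMono (p ++ ·) :=
  fun _ _ => List.append_left_lt

theorem List.not_isPrefix_of_lt {x y : List α} (h : x < y) : ¬ y <+: x :=
  fun hyx => hyx.le h

theorem lexLl_iff {x y : List α} : LexLl x y ↔ x < y ∧ ¬ x <+: y :=
  and_congr_right fun hxy => by rw [and_iff_left (lexLt_iff_lt.1 hxy).ne]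

theorem LexLl.append_right {p s : List α} (h : LexLl p s) (u : List α) : LexLl p (s ++ u) := by
  rw [lexLl_iff] at h ⊢
  obtain ⟨hlt, hpre⟩ := h
  refine ⟨List.Lex.append_right _ u hlt, fun hpre' => ?_⟩
  rcases le_total p.length s.length with hle | hle
  · exact hpre (List.prefix_of_prefix_length_le hpre' (s.prefix_append u) hle)
  · exact List.not_isPrefix_of_lt hlt
      (List.prefix_of_prefix_length_le (s.prefix_append u) hpre' hle)

theorem exists_lexLl_of_lt_of_isSuffix {w s : List α} (hsuf : s <:+ w) (hlt : w < s) :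
    ∃ p s', p ≠ [] ∧ s' ≠ [] ∧ w = p ++ s' ∧ LexLl p s' := by
  obtain ⟨u, rfl⟩ := hsuf
  have hu : u ≠ [] := by rintro rfl; exact hlt.false
  by_cases hpre : u <+: s
  · obtain ⟨t, rfl⟩ := hpre
    have hut : u ++ t < t := (List.strictMono_append_left u).lt_iff_lt.1 hlt
    have : t.length < (u ++ t).length := by simp [List.length_pos_iff.2 hu]
    exact exists_lexLl_of_lt_of_isSuffix ⟨u ++ u, by simp⟩ (hlt.trans hut)
  · refine ⟨u, s, hu, ?_, rfl, lexLl_iff.2 ⟨?_, hpre⟩⟩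
    · rintro rfl; exact List.not_lt_nil _ hlt
    · rcases lt_trichotomy u s with h | rfl | h
      · exact h
      · exact absurd (List.prefix_refl u) hpre
      · exact absurd (List.Lex.append_right _ s h) (lt_asymm hlt)
termination_by s.length

theorem exists_lexLl_of_not_isInvLyndonWord {w : List α} (hw : w ≠ [])
    (h : ¬ IsInvLyndonWord w) :
    ∃ p s, p ≠ [] ∧ s ≠ [] ∧ w = p ++ s ∧ LexLl p s := by
  simp only [IsInvLyndonWord, lexLt_iff_lt, not_and, not_forall, not_lt] at h
  obtain ⟨s, hsuf, hsw, -, hws⟩ := h hw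
  exact exists_lexLl_of_lt_of_isSuffix hsuf (hws.lt_of_ne (Ne.symm hsw))

end

theorem stmt6 {α : Type*} [LinearOrder α] (w : List α)
    (hw : w ≠ []) (h : ¬ IsInvLyndonWord w) :
    ∃ p s : List α, p ≠ [] ∧ s ≠ [] ∧ w = p ++ s ∧
      IsInvLyndonWord p ∧ LexLl p s := by
  obtain ⟨p, s, hp, hs, rfl, hps⟩ := exists_lexLl_of_not_isInvLyndonWord hw h
  by_cases hpL : IsInvLyndonWord p
  · exact ⟨p, s, hp, hs, rfl, hpL, hps⟩
  have : p.length < (p ++ s).length := by simp [List.length_pos_iff.2 hs]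
  obtain ⟨p', s', hp', -, rfl, hp'L, hp's'⟩ := stmt6 p hp hpL
  exact ⟨p', s' ++ s, hp', by simp [hs], by simp, hp'L, hp's'.append_right s⟩
termination_by w.length
end

section
/- Let w be a nonempty word and let (p, p̄) be in Pref_bre(w). Then there exist words r, s and letters a, b with a < b such that p = ras and p̄ = rb. -/
def IsBre {α : Type*} [LinearOrder α] (w p pb : List α) : Prop :=
  IsInvLyndonWord p ∧
  (∃ v : List α, v ≠ [] ∧ w = p ++ v ∧ pb <+: v) ∧
  pb ≠ [] ∧ IsInvLyndonWord pb ∧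
  (∀ z' : List α, z' ≠ [] → z' <+: pb → z' ≠ pb → IsInvLyndonWord (p ++ z')) ∧
  ¬ IsInvLyndonWord (p ++ pb) ∧ LexLl p pb

/-! Since `p ≪ p̄`, the words `p` and `p̄` first differ at some position: `p = r a s` and
`p̄ = r b t` with `a < b`. If `t` were nonempty, `r b` would be a nonempty proper prefix of `p̄`,
so `p r b` would be an inverse Lyndon word and its proper suffix `r b` would be smaller than
`p r b = r a (s r b)`, which is impossible since `a < b`. Hence `p̄ = r b`. -/

theorem List.Lex.isPrefix_or_exists_rel {α : Type*} {R : α → α → Prop} {x y : List α}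
    (h : List.Lex R x y) :
    x <+: y ∨ ∃ r a b s t, R a b ∧ x = r ++ a :: s ∧ y = r ++ b :: t := by
  induction h with
  | nil => exact Or.inl List.nil_prefix
  | @cons c _ _ _ ih =>
    rcases ih with ⟨k, hk⟩ | ⟨r, a, b, s, t, hab, rfl, rfl⟩
    · exact Or.inl ⟨k, by simp [hk]⟩
    · exact Or.inr ⟨c :: r, a, b, s, t, hab, rfl, rfl⟩
  | @rel a s b t hab => exact Or.inr ⟨[], a, b, s, t, hab, rfl, rfl⟩

theorem LexLl.exists_lt {α : Type*} [LinearOrder α] {x y : List α} (h : LexLl x y) :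
    ∃ r a b s t, a < b ∧ x = r ++ a :: s ∧ y = r ++ b :: t := by
  refine h.1.isPrefix_or_exists_rel.resolve_left fun hpre => h.2 ⟨hpre, ?_⟩
  rintro rfl
  exact List.lex_irrefl lt_irrefl x h.1

theorem not_lexLt_append_cons_of_lt {α : Type*} [LinearOrder α] {a b : α} (hab : a < b)
    (r s t : List α) : ¬ LexLt (r ++ b :: t) (r ++ a :: s) :=
  List.lex_asymm lt_asymm ((List.Lex.rel hab).append_left _ r)

theorem IsInvLyndonWord.lexLt_of_append {α : Type*} [LinearOrder α] {u z : List α}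
    (h : IsInvLyndonWord (u ++ z)) (hu : u ≠ []) (hz : z ≠ []) : LexLt z (u ++ z) :=
  h.2 z (List.suffix_append u z) (by simpa using hu) hz

theorem stmt7_general {α : Type*} [LinearOrder α] (w p pb : List α)
    (h : IsBre w p pb) :
    ∃ (r s : List α) (a b : α), a < b ∧
      p = r ++ [a] ++ s ∧ pb = r ++ [b] := by
  obtain ⟨hp, -, -, -, hprefix, -, hll⟩ := h
  obtain ⟨r, a, b, s, t, hab, rfl, rfl⟩ := hll.exists_lt
  refine ⟨r, s, a, b, hab, by simp, ?_⟩
  obtain rfl | ht := eq_or_ne t []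
  · simp
  have hrb : IsInvLyndonWord (r ++ a :: s ++ (r ++ [b])) :=
    hprefix _ (by simp) ⟨t, by simp⟩ (by simpa using ht.symm)
  have hlt := hrb.lexLt_of_append hp.1 (by simp)
  exact absurd (by simpa using hlt) (not_lexLt_append_cons_of_lt hab r (s ++ r ++ [b]) [])

theorem stmt7 {α : Type*} [LinearOrder α] (w p pb : List α)
    (hw : w ≠ []) (h : IsBre w p pb) :
    ∃ (r s : List α) (a b : α), a < b ∧
      p = r ++ [a] ++ s ∧ pb = r ++ [b] :=
  stmt7_general w p pb h
end

section
/- A nonempty word w is not an inverse Lyndon word if and only if the set Pref_bre(w) is nonempty. -/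
/-!
Nonempty prefixes of inverse Lyndon words are inverse Lyndon, since `p ≪ s` forces
`p r ≪ s r`; this gives one direction. Conversely, let `z` be the shortest prefix of `w`
that is not inverse Lyndon and `s` the shortest nonempty proper suffix of `z` with `z ≺ s`.
Writing `z = p s`, the pair `(p, s)` lies in `Pref_bre(w)`.
-/

namespace List

variable {α : Type*}

theorem exists_forall_length_le {P : List α → Prop} (h : ∃ x, P x) :
    ∃ x, P x ∧ ∀ y, P y → x.length ≤ y.length := by
  obtain ⟨x, hx, hmin⟩ := (measure List.length).wf.has_min {x | P x} h
  exact ⟨x, hx, fun y hy => not_lt.1 (hmin y hy)⟩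

variable [LinearOrder α]

theorem lt_of_append_lt_append_left_s8 {p x y : List α} (h : p ++ x < p ++ y) : x < y := by
  induction p with
  | nil => exact h
  | cons a p ih => exact ih (List.lex_cons_iff.1 h)

theorem append_lt_append_of_lt_of_not_prefix {x y : List α} (h : x < y) (hxy : ¬ x <+: y)
    (u v : List α) : x ++ u < y ++ v := by
  induction h with
  | nil => exact absurd nil_prefix hxy
  | cons _ ih => exact Lex.cons (ih fun h => hxy (cons_prefix_cons.2 ⟨rfl, h⟩))
  | rel h => exact Lex.rel h

end List

section InvLyndon

variable {α : Type*} [LinearOrder α]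

theorem isInvLyndonWord_iff {w : List α} :
    IsInvLyndonWord w ↔ w ≠ [] ∧ ∀ s, s <:+ w → s ≠ w → s ≠ [] → s < w :=
  Iff.rfl

/-- If `s r ≺ p r` for a proper suffix `s` of `p`, then `p ≪ s` is impossible, so `s ≺ p`. -/
theorem IsInvLyndonWord.of_prefix {w p : List α} (hw : IsInvLyndonWord w) (hp : p <+: w)
    (hne : p ≠ []) : IsInvLyndonWord p := by
  obtain ⟨r, rfl⟩ := hp
  refine ⟨hne, fun s hs hsp hs_ne => ?_⟩
  have hsr_suffix : s ++ r <:+ p ++ r := by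
    obtain ⟨t, rfl⟩ := hs
    exact ⟨t, (List.append_assoc t s r).symm⟩
  have hsr : s ++ r < p ++ r :=
    hw.2 _ hsr_suffix (fun h => hsp (List.append_cancel_right h)) (by simp [hs_ne])
  have hlen : s.length < p.length :=
    lt_of_le_of_ne hs.length_le fun h => hsp (hs.eq_of_length h)
  by_contra hsp_lt
  have hps : p < s := lt_of_le_of_ne (not_lt.1 hsp_lt) (Ne.symm hsp)
  have hnp : ¬ p <+: s := fun h => absurd h.length_le (not_le.2 hlen)
  exact lt_asymm hsr (List.append_lt_append_of_lt_of_not_prefix hps hnp r r)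

theorem exists_shortest_prefix_not_isInvLyndonWord {w : List α} (hw : w ≠ [])
    (h : ¬ IsInvLyndonWord w) :
    ∃ z r, w = z ++ r ∧ z ≠ [] ∧ ¬ IsInvLyndonWord z ∧
      ∀ u, u <+: z → u ≠ [] → u ≠ z → IsInvLyndonWord u := by
  obtain ⟨z, ⟨⟨r, rfl⟩, hz, hbad⟩, hmin⟩ := List.exists_forall_length_le
    (P := fun z => z <+: w ∧ z ≠ [] ∧ ¬ IsInvLyndonWord z) ⟨w, List.prefix_refl w, hw, h⟩
  refine ⟨z, r, rfl, hz, hbad, fun u hu hu_ne huz => ?_⟩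
  by_contra hu_bad
  have hle := hmin u ⟨hu.trans (List.prefix_append z r), hu_ne, hu_bad⟩
  exact huz (hu.eq_of_length (le_antisymm hu.length_le hle))

theorem exists_shortest_suffix_not_lt {z : List α} (hz : z ≠ []) (h : ¬ IsInvLyndonWord z) :
    ∃ p s, z = p ++ s ∧ p ≠ [] ∧ s ≠ [] ∧ z < s ∧
      ∀ t, t <:+ z → t ≠ [] → t.length < s.length → t < z := by
  have hex : ∃ s, s <:+ z ∧ s ≠ z ∧ s ≠ [] ∧ ¬ s < z := by
    simpa [isInvLyndonWord_iff, hz] using h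
  obtain ⟨s, ⟨⟨p, hps⟩, hsz, hs, hs_not_lt⟩, hmin⟩ := List.exists_forall_length_le hex
  refine ⟨p, s, hps.symm, ?_, hs, lt_of_le_of_ne (not_lt.1 hs_not_lt) (Ne.symm hsz),
    fun t ht ht_ne hlen => ?_⟩
  · rintro rfl
    exact hsz (by simpa using hps)
  · by_contra ht_not_lt
    have htz : t ≠ z := by
      rintro rfl
      exact absurd (List.IsSuffix.length_le ⟨p, hps⟩) (not_le.2 hlen)
    exact absurd (hmin t ⟨ht, htz, ht_ne, ht_not_lt⟩) (not_le.2 hlen)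

section ShortestSuffix

variable {p s : List α}

theorem isInvLyndonWord_of_shortest_suffix (hs : s ≠ []) (hlt : p ++ s < s)
    (hshort : ∀ t, t <:+ p ++ s → t ≠ [] → t.length < s.length → t < p ++ s) :
    IsInvLyndonWord s := by
  refine ⟨hs, fun t ht hts ht_ne => ?_⟩
  have hlen : t.length < s.length :=
    lt_of_le_of_ne ht.length_le fun h => hts (ht.eq_of_length h)
  exact (hshort t (ht.trans (List.suffix_append p s)) ht_ne hlen).trans hlt

/-- Writing `s = p t` would give `p s ≺ s ≺ t ≺ p s`. -/
theorem not_prefix_of_shortest_suffix (hp : p ≠ []) (hlt : p ++ s < s)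
    (hshort : ∀ t, t <:+ p ++ s → t ≠ [] → t.length < s.length → t < p ++ s) :
    ¬ p <+: s := by
  rintro ⟨t, rfl⟩
  rcases eq_or_ne t [] with rfl | ht
  · simp only [List.append_nil] at hlt
    exact (List.le_append_left (l₂ := p)) hlt
  have hst : p ++ t < t := List.lt_of_append_lt_append_left_s8 hlt
  have hlen : t.length < (p ++ t).length := by
    simpa using List.length_pos_iff.2 hp
  have htz : t < p ++ (p ++ t) :=
    hshort t ((List.suffix_append p t).trans (List.suffix_append _ _)) ht hlen
  exact lt_asymm htz (hlt.trans hst)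

theorem lexLl_of_shortest_suffix (hp : p ≠ []) (hlt : p ++ s < s)
    (hshort : ∀ t, t <:+ p ++ s → t ≠ [] → t.length < s.length → t < p ++ s) :
    LexLl p s := by
  have hnp := not_prefix_of_shortest_suffix hp hlt hshort
  refine ⟨?_, fun h => hnp h.1⟩
  rcases lt_trichotomy p s with h | rfl | h
  · exact h
  · exact absurd (List.prefix_refl p) hnp
  · exact absurd (List.Lex.append_right _ s h) (lt_asymm hlt)

theorem isBre_of_shortest {r : List α} (hp : p ≠ []) (hs : s ≠ [])
    (hbad : ¬ IsInvLyndonWord (p ++ s))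
    (hmin : ∀ u, u <+: p ++ s → u ≠ [] → u ≠ p ++ s → IsInvLyndonWord u)
    (hlt : p ++ s < s)
    (hshort : ∀ t, t <:+ p ++ s → t ≠ [] → t.length < s.length → t < p ++ s) :
    IsBre (p ++ s ++ r) p s := by
  refine ⟨hmin p (List.prefix_append p s) hp (by simpa using hs),
    ⟨s ++ r, by simp [hs], List.append_assoc p s r, List.prefix_append s r⟩, hs,
    isInvLyndonWord_of_shortest_suffix hs hlt hshort, fun z' hz' hz's hz'_ne => ?_, hbad,
    lexLl_of_shortest_suffix hp hlt hshort⟩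
  exact hmin _ (List.prefix_append_right_inj p |>.2 hz's) (by simp [hp]) (by simpa using hz'_ne)

end ShortestSuffix

end InvLyndon

theorem stmt8 {α : Type*} [LinearOrder α] (w : List α) (hw : w ≠ []) :
    ¬ IsInvLyndonWord w ↔ ∃ p pb : List α, IsBre w p pb := by
  constructor
  · intro hbad
    obtain ⟨z, r, rfl, hz, hz_bad, hmin⟩ := exists_shortest_prefix_not_isInvLyndonWord hw hbad
    obtain ⟨p, s, rfl, hp, hs, hlt, hshort⟩ := exists_shortest_suffix_not_lt hz hz_bad
    exact ⟨p, s, isBre_of_shortest hp hs hz_bad hmin hlt hshort⟩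
  · rintro ⟨p, pb, hp, ⟨v, -, rfl, ⟨u, rfl⟩⟩, -, -, -, hbad, -⟩ hw_inv
    exact hbad (hw_inv.of_prefix ⟨u, by simp⟩ (by simp [hp.1]))
end

section
/- If a nonempty word w is not an inverse Lyndon word, then Pref_bre(w) contains exactly one pair. -/
/-!
Let `u` be the shortest prefix of `w` that is not an inverse Lyndon word. Since being inverse
Lyndon passes to nonempty prefixes, the pairs of `Pref_bre(w)` are exactly the factorizations
`u = p p̄` with `p̄` inverse Lyndon and `p ≪ p̄`.

In such a factorization write `u = r a u'` and `p̄ = r b y` with `a < b`. The prefix `p r b` of `u`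
has its suffix `r b` above its own prefix `r a`, so it is not inverse Lyndon and must be all of
`u`: hence `p̄ = r b`. A factorization is obtained by taking for `p̄` the shortest proper suffix of
`u` lying above `u`. Two factorizations with `|p̄₂| < |p̄₁|` cannot coexist, because `p̄₂ = r₂ b₂`
would be a suffix of `p̄₁` lying above its prefix `r₂ a₂`.
-/

theorem List.IsPrefix.length_lt_of_ne {α : Type*} {l₁ l₂ : List α} (h : l₁ <+: l₂)
    (hne : l₁ ≠ l₂) : l₁.length < l₂.length :=
  lt_of_le_of_ne h.length_le fun hl => hne (h.eq_of_length hl)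

theorem List.IsSuffix.length_lt_of_ne {α : Type*} {l₁ l₂ : List α} (h : l₁ <:+ l₂)
    (hne : l₁ ≠ l₂) : l₁.length < l₂.length :=
  lt_of_le_of_ne h.length_le fun hl => hne (h.eq_of_length hl)

section

-- `LexLt x y` unfolds to `x < y` for Mathlib's lexicographic order on `List α`.
variable {α : Type*} [LinearOrder α]

theorem List.lt_of_isPrefix_of_ne {x y : List α} (h : x <+: y) (hne : x ≠ y) : x < y := by
  obtain ⟨_ | ⟨c, t⟩, rfl⟩ := h
  · simp at hne
  · simpa using List.Lex.append_left (· < ·) (List.Lex.nil (a := c) (l := t)) x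

theorem List.take_le_take_of_lt {x y : List α} (h : x < y) (n : ℕ) : x.take n ≤ y.take n := by
  induction h generalizing n with
  | nil =>
    cases n with
    | zero => simp
    | succ n => exact le_of_lt List.Lex.nil
  | cons _ ih =>
    cases n with
    | zero => simp
    | succ n => exact List.cons_le_cons _ (ih n)
  | rel hab =>
    cases n with
    | zero => simp
    | succ n => exact le_of_lt (List.Lex.rel hab)

theorem lexLl_iff_s9 {x y : List α} :
    LexLl x y ↔
      ∃ (r : List α) (a b : α) (x' y' : List α), a < b ∧ x = r ++ a :: x' ∧ y = r ++ b :: y' := by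
  constructor
  · rintro ⟨hlt, hnp⟩
    induction hlt with
    | nil => simp at hnp
    | @cons a _ _ _ ih =>
      obtain ⟨r, a', b, x', y', hab, rfl, rfl⟩ := ih (by simpa using hnp)
      exact ⟨a :: r, a', b, x', y', hab, rfl, rfl⟩
    | @rel a x' b y' hab => exact ⟨[], a, b, x', y', hab, rfl, rfl⟩
  · rintro ⟨r, a, b, x', y', hab, rfl, rfl⟩
    refine ⟨List.Lex.append_left _ (List.Lex.rel hab) r, fun ⟨hp, _⟩ => ?_⟩
    exact hab.ne (List.cons_prefix_cons.1 ((List.prefix_append_right_inj r).1 hp)).1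

theorem LexLl.ne_nil_left {x y : List α} (h : LexLl x y) : x ≠ [] := by
  obtain ⟨r, a, b, x', y', -, rfl, rfl⟩ := lexLl_iff_s9.1 h
  simp

theorem LexLl.append_right_s9 {x y : List α} (h : LexLl x y) (z : List α) : LexLl (x ++ z) y := by
  obtain ⟨r, a, b, x', y', hab, rfl, rfl⟩ := lexLl_iff_s9.1 h
  exact lexLl_iff_s9.2 ⟨r, a, b, x' ++ z, y', hab, by simp, rfl⟩

theorem IsInvLyndonWord.of_prefix_s9 {x y : List α} (hy : IsInvLyndonWord y) (hxy : x <+: y)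
    (hx : x ≠ []) : IsInvLyndonWord x := by
  obtain ⟨t, rfl⟩ := hxy
  refine ⟨hx, fun s hs hsx hs0 => ?_⟩
  have hlen : s.length < x.length := hs.length_lt_of_ne hsx
  have hlt : s ++ t < x ++ t := by
    obtain ⟨q, rfl⟩ := hs
    refine hy.2 (s ++ t) ⟨q, by simp⟩ (fun h => ?_) (by simp [hs0])
    simpa using hlen.ne (by simpa using congrArg List.length h)
  calc s = (s ++ t).take s.length := by simp
    _ ≤ (x ++ t).take s.length := List.take_le_take_of_lt hlt _
    _ = x.take s.length := List.take_append_of_le_length hlen.le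
    _ < x := List.lt_of_isPrefix_of_ne (List.take_prefix _ _) (by simp [hlen])

theorem not_isInvLyndonWord_of_jump {x r : List α} {a b : α} (hab : a < b) (hx : x ≠ [])
    (hr : r ++ [a] <+: x ++ r ++ [b]) : ¬ IsInvLyndonWord (x ++ r ++ [b]) := by
  intro h
  obtain ⟨t, ht⟩ := hr
  have hlt : r ++ [b] < x ++ r ++ [b] :=
    h.2 _ ⟨x, by simp⟩ (by simpa using hx) (by simp)
  have hgt : r ++ a :: t < r ++ [b] := List.append_left_lt (List.Lex.rel hab)
  exact lt_asymm hlt (by simpa [← ht] using hgt)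

def IsMinimalNonInvLyndonWord (u : List α) : Prop :=
  u ≠ [] ∧ ¬ IsInvLyndonWord u ∧ ∀ x, x <+: u → x ≠ u → x ≠ [] → IsInvLyndonWord x

theorem exists_isMinimalNonInvLyndonWord_prefix {w : List α} (hw : w ≠ [])
    (h : ¬ IsInvLyndonWord w) : ∃ u, u <+: w ∧ IsMinimalNonInvLyndonWord u := by
  obtain ⟨u, ⟨huw, hu0, hu⟩, hmin⟩ := (measure List.length).wf.has_min
    {u | u <+: w ∧ u ≠ [] ∧ ¬ IsInvLyndonWord u} ⟨w, List.prefix_refl w, hw, h⟩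
  refine ⟨u, huw, hu0, hu, fun x hxu hx hx0 => ?_⟩
  by_contra hxinv
  exact hmin x ⟨hxu.trans huw, hx0, hxinv⟩ (hxu.length_lt_of_ne hx)

def IsBreFactorization (u p pb : List α) : Prop :=
  p ++ pb = u ∧ IsInvLyndonWord pb ∧ LexLl p pb

namespace IsMinimalNonInvLyndonWord

theorem eq_of_prefix {u v w : List α} (hu : IsMinimalNonInvLyndonWord u)
    (hv : IsMinimalNonInvLyndonWord v) (huw : u <+: w) (hvw : v <+: w) : u = v := by
  rcases List.prefix_or_prefix_of_prefix huw hvw with huv | hvu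
  · by_contra hne
    exact hu.2.1 (hv.2.2 u huv hne hu.1)
  · by_contra hne
    exact hv.2.1 (hu.2.2 v hvu (Ne.symm hne) hv.1)

theorem exists_jump {u p pb : List α} (hu : IsMinimalNonInvLyndonWord u) (hsplit : p ++ pb = u)
    (hp : p ≠ []) (hll : LexLl u pb) :
    ∃ (r : List α) (a b : α) (u' : List α), a < b ∧ u = r ++ a :: u' ∧ pb = r ++ [b] := by
  obtain ⟨r, a, b, u', y', hab, rfl, rfl⟩ := lexLl_iff_s9.1 hll
  have hz : p ++ r ++ [b] <+: r ++ a :: u' := ⟨y', by simp [← hsplit]⟩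
  have hra : r ++ [a] <+: p ++ r ++ [b] :=
    List.prefix_of_prefix_length_le ⟨u', by simp⟩ hz (by simp)
  have hzu : p ++ r ++ [b] = r ++ a :: u' := by
    by_contra hne
    exact not_isInvLyndonWord_of_jump hab hp hra (hu.2.2 _ hz hne (by simp))
  refine ⟨r, a, b, u', hab, rfl, ?_⟩
  simpa using hzu.trans hsplit.symm

theorem exists_isBreFactorization {u : List α} (hu : IsMinimalNonInvLyndonWord u) :
    ∃ p pb, IsBreFactorization u p pb := by
  obtain ⟨s, hs, hsu, hs0, hus⟩ : ∃ s, s <:+ u ∧ s ≠ u ∧ s ≠ [] ∧ u < s := by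
    have h := hu.2.1
    simp only [IsInvLyndonWord, not_and, not_forall] at h
    obtain ⟨s, hs, hsu, hs0, hus⟩ := h hu.1
    exact ⟨s, hs, hsu, hs0, lt_of_le_of_ne (not_lt.1 hus) (Ne.symm hsu)⟩
  obtain ⟨pb, ⟨⟨p, hsplit⟩, hpbu, hpb0, hupb⟩, hmin⟩ := (measure List.length).wf.has_min
    {s | s <:+ u ∧ s ≠ u ∧ s ≠ [] ∧ u < s} ⟨s, hs, hsu, hs0, hus⟩
  have hp : p ≠ [] := by
    rintro rfl
    exact hpbu hsplit
  have hlen : pb.length < u.length := by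
    simpa [← hsplit, List.length_pos_iff] using hp
  have hpb : IsInvLyndonWord pb := by
    refine ⟨hpb0, fun s hs hspb hs0 => ?_⟩
    have hslen : s.length < pb.length := hs.length_lt_of_ne hspb
    have hsu : s ≠ u := by
      rintro rfl
      omega
    have hus : ¬ u < s := fun h => hmin s ⟨hs.trans ⟨p, hsplit⟩, hsu, hs0, h⟩ hslen
    exact (lt_of_le_of_ne (not_lt.1 hus) hsu).trans hupb
  have hll : LexLl u pb := ⟨hupb, fun ⟨hpre, _⟩ => absurd hpre.length_le (by omega)⟩
  obtain ⟨r, a, b, u', hab, rfl, hpbr⟩ := hu.exists_jump hsplit hp hll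
  have hjump : ∀ r', r' ++ [a] <+: pb → pb ≠ p ++ r' ++ [b] := fun r' h1 h2 =>
    not_isInvLyndonWord_of_jump hab hp (h2 ▸ h1) (h2 ▸ hpb)
  rcases List.append_eq_append_iff.1 hsplit with ⟨r', rfl, hpb'⟩ | ⟨_ | ⟨c, p'⟩, rfl, hc⟩
  · exact absurd (by simp [hpbr]) (hjump r' ⟨u', by simp [hpb']⟩)
  · exact absurd (by simp [hpbr]) (hjump [] ⟨u', by simp [hc]⟩)
  · obtain ⟨rfl, rfl⟩ : a = c ∧ u' = p' ++ pb := by simpa using hc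
    exact ⟨r ++ a :: p', pb, hsplit, hpb, lexLl_iff_s9.2 ⟨r, a, b, p', [], hab, rfl, hpbr⟩⟩

theorem not_length_lt_of_isBreFactorization {u p₁ pb₁ p₂ pb₂ : List α}
    (hu : IsMinimalNonInvLyndonWord u) (h₁ : IsBreFactorization u p₁ pb₁)
    (h₂ : IsBreFactorization u p₂ pb₂) : ¬ p₁.length < p₂.length := by
  intro hlt
  obtain ⟨hsplit₁, hinv₁, hll₁⟩ := h₁
  obtain ⟨hsplit₂, -, hll₂⟩ := h₂
  obtain ⟨x, rfl, hx⟩ : ∃ x, p₂ = p₁ ++ x ∧ pb₁ = x ++ pb₂ := by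
    rcases List.append_eq_append_iff.1 (hsplit₁.trans hsplit₂.symm) with h | ⟨c, rfl, -⟩
    · exact h
    · simp at hlt
  have hx0 : x ≠ [] := by
    rintro rfl
    simp at hlt
  obtain ⟨r₁, a₁, b₁, u₁, -, hu₁, hr₁⟩ := hu.exists_jump hsplit₁ hll₁.ne_nil_left
    (hsplit₁ ▸ hll₁.append_right_s9 pb₁)
  obtain ⟨r₂, a₂, b₂, u₂, hab₂, hu₂, hr₂⟩ := hu.exists_jump hsplit₂ hll₂.ne_nil_left
    (hsplit₂ ▸ hll₂.append_right_s9 pb₂)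
  have hpb₁ : pb₁ = x ++ r₂ ++ [b₂] := by rw [hx, hr₂, List.append_assoc]
  have hlen : (r₂ ++ [a₂]).length ≤ r₁.length := by
    have := congrArg List.length (hr₁.symm.trans hpb₁)
    simp only [List.length_append, List.length_singleton] at this ⊢
    have := List.length_pos_iff.2 hx0
    omega
  have hpre : r₂ ++ [a₂] <+: pb₁ := hr₁ ▸
    (List.prefix_of_prefix_length_le ⟨u₂, by simp [hu₂]⟩ ⟨a₁ :: u₁, hu₁.symm⟩ hlen).trans
      (List.prefix_append _ _)
  exact not_isInvLyndonWord_of_jump hab₂ hx0 (hpb₁ ▸ hpre) (hpb₁ ▸ hinv₁)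

theorem eq_of_isBreFactorization {u p₁ pb₁ p₂ pb₂ : List α}
    (hu : IsMinimalNonInvLyndonWord u) (h₁ : IsBreFactorization u p₁ pb₁)
    (h₂ : IsBreFactorization u p₂ pb₂) : p₁ = p₂ ∧ pb₁ = pb₂ :=
  List.append_inj (h₁.1.trans h₂.1.symm) <|
    le_antisymm (not_lt.1 (hu.not_length_lt_of_isBreFactorization h₂ h₁))
      (not_lt.1 (hu.not_length_lt_of_isBreFactorization h₁ h₂))

end IsMinimalNonInvLyndonWord

theorem isBre_iff {w u p pb : List α} (huw : u <+: w) (hu : IsMinimalNonInvLyndonWord u) :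
    IsBre w p pb ↔ IsBreFactorization u p pb := by
  constructor
  · rintro ⟨hp, ⟨v, -, rfl, hpbv⟩, -, hpb, hz, hnot, hll⟩
    refine ⟨?_, hpb, hll⟩
    have hmin : IsMinimalNonInvLyndonWord (p ++ pb) := by
      refine ⟨by simp [hp.1], hnot, fun x hx hxne hx0 => ?_⟩
      rcases List.prefix_or_prefix_of_prefix hx (List.prefix_append p pb) with hxp | ⟨z, rfl⟩
      · exact hp.of_prefix_s9 hxp hx0
      · rcases eq_or_ne z [] with rfl | hz0
        · simpa using hp
        · exact hz z hz0 ((List.prefix_append_right_inj p).1 hx) (by rintro rfl; exact hxne rfl)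
    exact hmin.eq_of_prefix hu ((List.prefix_append_right_inj p).2 hpbv) huw
  · rintro ⟨rfl, hpb, hll⟩
    obtain ⟨t, rfl⟩ := huw
    refine ⟨hu.2.2 p (List.prefix_append p pb) (by simpa using hpb.1) hll.ne_nil_left,
      ⟨pb ++ t, by simp [hpb.1], by simp, List.prefix_append _ _⟩, hpb.1, hpb,
      fun z hz0 hz hzpb => ?_, hu.2.1, hll⟩
    exact hu.2.2 _ ((List.prefix_append_right_inj p).2 hz) (by simpa using hzpb) (by simp [hz0])

end

theorem stmt9 {α : Type*} [LinearOrder α] (w : List α)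
    (hw : w ≠ []) (h : ¬ IsInvLyndonWord w) :
    ∃! q : List α × List α, IsBre w q.1 q.2 := by
  obtain ⟨u, huw, hu⟩ := exists_isMinimalNonInvLyndonWord_prefix hw h
  obtain ⟨p, pb, hfac⟩ := hu.exists_isBreFactorization
  refine ⟨(p, pb), (isBre_iff huw hu).2 hfac, fun q hq => ?_⟩
  obtain ⟨hp, hpb⟩ := hu.eq_of_isBreFactorization ((isBre_iff huw hu).1 hq) hfac
  exact Prod.ext hp hpb
end

section
/- If a nonempty word w has no prefix of the form r a u r b with r, u words and a, b letters satisfying a < b, then w is an inverse Lyndon word. -/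
/-!
Let `s` be a proper suffix of `w = p ++ s` and suppose `w < s`. The two words first differ
after a common prefix `r`, with letters `a < b`. If `r a` fits inside `p`, then
`w = r a u · r b y` has a forbidden prefix. Otherwise `r = p t`, so `s = t a x` is smaller than
the shorter suffix `t b y` of `w`; by induction on the length of the suffix, `t b y < w`,
contradicting `w < s`.
-/

namespace List

theorem Lex.isPrefix_or_exists_eq_append_cons {α : Type*} {R : α → α → Prop} {l₁ l₂ : List α}
    (h : Lex R l₁ l₂) :
    l₁ <+: l₂ ∨ ∃ (r x y : List α) (a b : α), R a b ∧ l₁ = r ++ a :: x ∧ l₂ = r ++ b :: y := by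
  induction h with
  | nil => exact .inl nil_prefix
  | @cons c _ _ _ ih =>
    rcases ih with hp | ⟨r, x, y, a, b, hab, rfl, rfl⟩
    · exact .inl (cons_prefix_cons.mpr ⟨rfl, hp⟩)
    · exact .inr ⟨c :: r, x, y, a, b, hab, rfl, rfl⟩
  | @rel a l₁ b l₂ hab => exact .inr ⟨[], l₁, l₂, a, b, hab, rfl, rfl⟩

end List

section InverseLyndon

variable {α : Type*} [LinearOrder α]

theorem exists_prefix_or_exists_shorter_suffix_gt_of_append_lt {p s : List α} (hp : p ≠ [])
    (hlt : p ++ s < s) :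
    (∃ (r u : List α) (a b : α), a < b ∧ r ++ [a] ++ u ++ r ++ [b] <+: p ++ s) ∨
      ∃ t, t <:+ s ∧ t.length < s.length ∧ s < t := by
  have hlen : s.length < (p ++ s).length := by
    simpa using List.length_pos_iff.mpr hp
  rcases List.Lex.isPrefix_or_exists_eq_append_cons hlt with hpre | ⟨r, x, y, a, b, hab, hw, hs⟩
  · exact absurd hpre.length_le (by omega)
  by_cases hle : p.length ≤ r.length
  · obtain ⟨t, rfl⟩ : p <+: r :=
      List.prefix_of_prefix_length_le (List.prefix_append p s) (hw ▸ List.prefix_append r _) hle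
    have hs' : s = t ++ a :: x := by simpa using hw
    refine .inr ⟨t ++ b :: y, ⟨p, by simp [hs]⟩, ?_, ?_⟩
    · simpa [hs] using List.length_pos_iff.mpr hp
    · exact hs' ▸ List.append_left_lt (List.Lex.rel hab)
  · obtain ⟨u, rfl⟩ : r ++ [a] <+: p :=
      List.prefix_of_prefix_length_le (hw ▸ ⟨x, by simp⟩) (List.prefix_append p s)
        (by simp only [List.length_append, List.length_singleton]; omega)
    exact .inl ⟨r, u, a, b, hab, ⟨y, by simp [hs]⟩⟩

theorem lt_of_isSuffix_of_forall_not_prefix {w : List α}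
    (h : ∀ (r u : List α) (a b : α), a < b → ¬ (r ++ [a] ++ u ++ r ++ [b]) <+: w)
    {s : List α} (hs : s <:+ w) (hsw : s ≠ w) : s < w := by
  obtain ⟨p, hw⟩ := hs
  have hp : p ≠ [] := by rintro rfl; exact hsw (by simpa using hw)
  by_contra hge
  have hlt : p ++ s < s := hw ▸ lt_of_le_of_ne (not_lt.mp hge) (Ne.symm hsw)
  rcases exists_prefix_or_exists_shorter_suffix_gt_of_append_lt hp hlt with
    ⟨r, u, a, b, hab, hpre⟩ | ⟨t, hts, htlen, hst⟩
  · exact h r u a b hab (hw ▸ hpre)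
  · have htw : t <:+ w := hts.trans (hw ▸ List.suffix_append p s)
    have htw' : t ≠ w := ne_of_apply_ne List.length (by rw [← hw, List.length_append]; omega)
    exact hge (hst.trans (lt_of_isSuffix_of_forall_not_prefix h htw htw'))
termination_by s.length

end InverseLyndon

theorem stmt10 {α : Type*} [LinearOrder α] (w : List α) (hw : w ≠ [])
    (h : ∀ (r u : List α) (a b : α), a < b →
      ¬ (r ++ [a] ++ u ++ r ++ [b]) <+: w) :
    IsInvLyndonWord w :=
  ⟨hw, fun _ hs hsw _ => lt_of_isSuffix_of_forall_not_prefix h hs hsw⟩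
end

section
/- Let w be a nonempty word which is not an inverse Lyndon word, and let (p, p̄) ∈ Pref_bre(w). Then p p̄ is the shortest nonempty prefix of w which is not an inverse Lyndon word. -/
theorem List.lt_of_lt_of_isPrefix_of_length_lt {α : Type*} [LT α] :
    ∀ {a v b : List α}, a < v → b <+: v → a.length < b.length → a < b
  | [], _, _ :: _, _, _, _ => List.nil_lt_cons _ _
  | _ :: _, [], _, hav, _, _ => absurd hav (List.not_lt_nil _)
  | _ :: a, _ :: v, _ :: b, hav, hbv, hlen => by
    obtain ⟨rfl, hbv'⟩ := List.cons_prefix_cons.mp hbv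
    rcases List.cons_lt_cons_iff.mp hav with hxy | ⟨rfl, hav'⟩
    · exact List.cons_lt_cons_iff.mpr (.inl hxy)
    · exact List.cons_lt_cons_iff.mpr
        (.inr ⟨rfl, lt_of_lt_of_isPrefix_of_length_lt hav' hbv' (Nat.lt_of_succ_lt_succ hlen)⟩)

section

variable {α : Type*} [LinearOrder α]

theorem IsInvLyndonWord.of_isPrefix {p x : List α} (hp : IsInvLyndonWord p) (hxp : x <+: p)
    (hx : x ≠ []) : IsInvLyndonWord x := by
  refine ⟨hx, fun s hsx hsne hs => ?_⟩
  obtain ⟨u, rfl⟩ := hsx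
  obtain ⟨t, rfl⟩ := hxp
  have hu : u ≠ [] := by rintro rfl; exact hsne rfl
  have hst : s ++ t < u ++ s ++ t := by
    refine lexLt_iff_lt.mp (hp.2 (s ++ t) ⟨u, by simp⟩ ?_ (by simp [hs]))
    intro heq
    simpa [List.length_eq_zero_iff, hu] using congrArg List.length heq
  have hsp : s < u ++ s ++ t := List.lt_of_le_of_lt (List.prefix_append s t).le hst
  exact lexLt_iff_lt.mpr <| List.lt_of_lt_of_isPrefix_of_length_lt hsp ⟨t, rfl⟩
    (by simpa [List.length_pos_iff] using hu)

namespace IsBre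

variable {w p pb : List α}

theorem append_isPrefix (h : IsBre w p pb) : p ++ pb <+: w := by
  obtain ⟨-, ⟨v, -, rfl, hpbv⟩, -⟩ := h
  exact (List.prefix_append_right_inj p).mpr hpbv

theorem isInvLyndonWord_of_length_lt (h : IsBre w p pb) {x : List α} (hxw : x <+: w)
    (hx : x ≠ []) (hlen : x.length < (p ++ pb).length) : IsInvLyndonWord x := by
  have hppb := h.append_isPrefix
  obtain ⟨hp, -, -, -, hz, -⟩ := h
  have hpw : p <+: w := (List.prefix_append p pb).trans hppb
  rcases le_or_gt x.length p.length with hle | hgt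
  · exact hp.of_isPrefix (List.prefix_of_prefix_length_le hxw hpw hle) hx
  · obtain ⟨z, rfl⟩ := List.prefix_of_prefix_length_le hpw hxw hgt.le
    have hzpb : z <+: pb :=
      (List.prefix_append_right_inj p).mp (List.prefix_of_prefix_length_le hxw hppb hlen.le)
    refine hz z ?_ hzpb ?_
    · rintro rfl
      simp at hgt
    · rintro rfl
      exact lt_irrefl _ hlen

end IsBre

end

theorem stmt11_general {α : Type*} [LinearOrder α] (w p pb : List α)
    (h : IsBre w p pb) :
    (p ++ pb) <+: w ∧ p ++ pb ≠ [] ∧ ¬ IsInvLyndonWord (p ++ pb) ∧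
    ∀ x : List α, x <+: w → x ≠ [] → ¬ IsInvLyndonWord x →
      (p ++ pb).length ≤ x.length := by
  obtain ⟨hp, -, -, -, -, hnot, -⟩ := id h
  refine ⟨h.append_isPrefix, List.append_ne_nil_of_left_ne_nil hp.1 pb, hnot, ?_⟩
  intro x hxw hx hxL
  by_contra! hlen
  exact hxL (h.isInvLyndonWord_of_length_lt hxw hx hlen)

theorem stmt11 {α : Type*} [LinearOrder α] (w p pb : List α)
    (hw : w ≠ []) (hnw : ¬ IsInvLyndonWord w) (h : IsBre w p pb) :
    (p ++ pb) <+: w ∧ p ++ pb ≠ [] ∧ ¬ IsInvLyndonWord (p ++ pb) ∧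
    ∀ x : List α, x <+: w → x ≠ [] → ¬ IsInvLyndonWord x →
      (p ++ pb).length ≤ x.length :=
  stmt11_general w p pb h
end

section
/- Let w be a nonempty word which is not an inverse Lyndon word. The shortest nonempty prefix of w which is not an inverse Lyndon word equals the shortest nonempty prefix x of w of the form x = r a u r b, where r, u are words and a, b letters with a < b. -/
/-!
A word `r a u r b` with `a < b` is not inverse Lyndon: its proper suffix `r b` is
lexicographically larger than the word. Conversely, let `x = y c` be a shortest prefix that is not
inverse Lyndon. Then `y` is inverse Lyndon, so the offending suffix `t c` of `x` has `t ≺ y`, which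
forces `t` to be a border of `y` followed in `y` by a letter `a < c`; shrinking the border until
its two occurrences no longer overlap gives `x = t a u t c`. Hence both kinds of prefixes have the
same minimal length, attained by the same words.
-/

theorem minimizer_iff_of_imp {β γ : Type*} [LinearOrder γ] [WellFoundedLT γ] (f : β → γ)
    {P Q : β → Prop} (hPQ : ∀ x, P x → Q x)
    (hQP : ∀ x, Q x → (∀ y, Q y → f x ≤ f y) → P x) (x : β) :
    (Q x ∧ ∀ y, Q y → f x ≤ f y) ↔ (P x ∧ ∀ y, P y → f x ≤ f y) := by
  constructor
  · rintro ⟨hQx, hmin⟩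
    exact ⟨hQP x hQx hmin, fun y hPy => hmin y (hPQ y hPy)⟩
  · rintro ⟨hPx, hmin⟩
    refine ⟨hPQ x hPx, fun y hQy => ?_⟩
    set z := Function.argminOn f {y | Q y} ⟨y, hQy⟩
    have hzmin : ∀ y, Q y → f z ≤ f y := fun y hy => Function.argminOn_le f {y | Q y} hy
    have hPz : P z := hQP z (Function.argminOn_mem f {y | Q y} _) hzmin
    exact (hmin z hPz).trans (hzmin y hQy)

section InverseLyndon

variable {α : Type*} [LinearOrder α]

def HasBorderAscent (x : List α) : Prop :=
  ∃ (r u : List α) (a b : α), a < b ∧ x = r ++ [a] ++ u ++ r ++ [b]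

theorem not_isInvLyndonWord_of_hasBorderAscent {x : List α} (hx : HasBorderAscent x) :
    ¬ IsInvLyndonWord x := by
  obtain ⟨r, u, a, b, hab, rfl⟩ := hx
  rintro ⟨-, hlt⟩
  have hsuf : r ++ [b] <:+ r ++ [a] ++ u ++ r ++ [b] := ⟨r ++ [a] ++ u, by simp⟩
  have hne : r ++ [b] ≠ r ++ [a] ++ u ++ r ++ [b] := fun h => by
    simpa using congrArg List.length h
  have hgt : r ++ [a] ++ u ++ r ++ [b] < r ++ [b] := by
    simpa using List.Lex.append_left _ (List.Lex.rel hab (l₁ := u ++ r ++ [b]) (l₂ := [])) r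
  exact lt_asymm (hlt _ hsuf hne (by simp)) hgt

theorem isInvLyndonWord_singleton (c : α) : IsInvLyndonWord [c] := by
  refine ⟨by simp, fun s hs hne hs0 => absurd ?_ hne⟩
  rcases List.suffix_cons_iff.mp hs with h | h
  · exact h
  · exact absurd (List.suffix_nil.mp h) hs0

/- If the two occurrences of the border `t` in `y = v ++ t` overlap, then `t = v ++ t'`, and the
shorter border `t'` is followed in `y` by the same letter `a`. -/
theorem hasBorderAscent_append_of_border {y t : List α} {a c : α} (hac : a < c)
    (hpre : t ++ [a] <+: y) (hsuf : t <:+ y) : HasBorderAscent (y ++ [c]) := by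
  obtain ⟨v, rfl⟩ := hsuf
  rcases lt_or_ge t.length v.length with hlen | hlen
  · obtain ⟨u, rfl⟩ : t ++ [a] <+: v :=
      List.prefix_of_prefix_length_le hpre (List.prefix_append v t) (by simpa using hlen)
    exact ⟨t, u, a, c, hac, by simp⟩
  · have htpre : t <+: v ++ t := (List.prefix_append t [a]).trans hpre
    obtain ⟨t', rfl⟩ : v <+: t := List.prefix_of_prefix_length_le (List.prefix_append v t) htpre hlen
    have hv : v ≠ [] := by
      rintro rfl
      simpa using hpre.length_le
    have hpre' : t' ++ [a] <+: v ++ (v ++ t') := by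
      refine List.IsPrefix.trans ?_ htpre
      simpa [List.prefix_append_right_inj] using hpre
    exact hasBorderAscent_append_of_border hac hpre'
      ((List.suffix_append v t').trans (List.suffix_append v _))
termination_by t.length
decreasing_by subst_vars; simpa [List.length_pos_iff] using hv

theorem exists_lt_of_lt_of_not_append_lt {t y : List α} {c : α} (hty : t < y)
    (hn : ¬ t ++ [c] < y ++ [c]) : ∃ (a : α) (z : List α), a < c ∧ y = t ++ a :: z := by
  induction hty with
  | @nil a z =>
    rw [List.nil_append, List.cons_append] at hn
    refine ⟨a, z, ?_, rfl⟩
    rcases lt_trichotomy a c with h | rfl | h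
    · exact h
    · exact absurd (List.Lex.cons (by cases z <;> exact List.Lex.nil)) hn
    · exact absurd (List.Lex.rel h) hn
  | rel hab => exact absurd (List.Lex.rel hab) hn
  | cons _ ih =>
    obtain ⟨a, z, hac, rfl⟩ := ih fun h => hn (List.Lex.cons h)
    exact ⟨a, z, hac, rfl⟩

theorem hasBorderAscent_append_of_isInvLyndonWord {y : List α} {c : α}
    (hy : IsInvLyndonWord y) (hyc : ¬ IsInvLyndonWord (y ++ [c])) :
    HasBorderAscent (y ++ [c]) := by
  simp only [IsInvLyndonWord, LexLt, not_and, not_forall, exists_prop] at hyc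
  obtain ⟨s, hs, hsne, hs0, hns⟩ := hyc (by simp)
  obtain ⟨t, rfl, ht⟩ := (List.suffix_concat_iff.mp hs).resolve_left hs0
  have hty : t < y := by
    rcases eq_or_ne t [] with rfl | ht0
    · obtain ⟨d, z, rfl⟩ := List.exists_cons_of_ne_nil hy.1
      exact List.Lex.nil
    · exact hy.2 t ht (by rintro rfl; exact hsne rfl) ht0
  obtain ⟨a, z, hac, rfl⟩ := exists_lt_of_lt_of_not_append_lt hty hns
  exact hasBorderAscent_append_of_border hac ⟨z, by simp⟩ ht

theorem hasBorderAscent_of_minimal {w x : List α} (hx : x <+: w) (hx0 : x ≠ [])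
    (hxn : ¬ IsInvLyndonWord x)
    (hmin : ∀ x', x' <+: w → x' ≠ [] → ¬ IsInvLyndonWord x' → x.length ≤ x'.length) :
    HasBorderAscent x := by
  obtain ⟨y, c, rfl⟩ := (List.eq_nil_or_concat' x).resolve_left hx0
  rcases eq_or_ne y [] with rfl | hy0
  · exact absurd (isInvLyndonWord_singleton c) hxn
  have hy : IsInvLyndonWord y := by
    by_contra hyn
    simpa using hmin y ((List.prefix_append y [c]).trans hx) hy0 hyn
  exact hasBorderAscent_append_of_isInvLyndonWord hy hxn

end InverseLyndon

theorem stmt12_general {α : Type*} [LinearOrder α] (w : List α)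
    (x : List α) :
    (x <+: w ∧ x ≠ [] ∧ ¬ IsInvLyndonWord x ∧
      (∀ x' : List α, x' <+: w → x' ≠ [] → ¬ IsInvLyndonWord x' →
        x.length ≤ x'.length)) ↔
    (x <+: w ∧ (∃ (r u : List α) (a b : α), a < b ∧
        x = r ++ [a] ++ u ++ r ++ [b]) ∧
      (∀ x' : List α, x' <+: w →
        (∃ (r u : List α) (a b : α), a < b ∧
          x' = r ++ [a] ++ u ++ r ++ [b]) →
        x.length ≤ x'.length)) := by
  have key := minimizer_iff_of_imp List.length
    (P := fun x => x <+: w ∧ HasBorderAscent x)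
    (Q := fun x => x <+: w ∧ x ≠ [] ∧ ¬ IsInvLyndonWord x)
    (fun x ⟨hx, hxb⟩ => ⟨hx, by obtain ⟨r, u, a, b, -, rfl⟩ := hxb; simp,
      not_isInvLyndonWord_of_hasBorderAscent hxb⟩)
    (fun x ⟨hx, hx0, hxn⟩ hmin => ⟨hx, hasBorderAscent_of_minimal hx hx0 hxn
      fun x' h1 h2 h3 => hmin x' ⟨h1, h2, h3⟩⟩) x
  simpa only [HasBorderAscent, and_imp, and_assoc] using key

theorem stmt12 {α : Type*} [LinearOrder α] (w : List α)
    (hw : w ≠ []) (hnw : ¬ IsInvLyndonWord w) (x : List α) :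
    (x <+: w ∧ x ≠ [] ∧ ¬ IsInvLyndonWord x ∧
      (∀ x' : List α, x' <+: w → x' ≠ [] → ¬ IsInvLyndonWord x' →
        x.length ≤ x'.length)) ↔
    (x <+: w ∧ (∃ (r u : List α) (a b : α), a < b ∧
        x = r ++ [a] ++ u ++ r ++ [b]) ∧
      (∀ x' : List α, x' <+: w →
        (∃ (r u : List α) (a b : α), a < b ∧
          x' = r ++ [a] ++ u ++ r ++ [b]) →
        x.length ≤ x'.length)) :=
  stmt12_general w x
end

section
/- If w is an anti-Lyndon word, then for every h ≥ 1 the power w^h is an inverse Lyndon word. -/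
def LexLtInv {α : Type*} [LinearOrder α] (x y : List α) : Prop :=
  List.Lex (fun a b => b < a) x y

def IsAntiLyndonWord {α : Type*} [LinearOrder α] (w : List α) : Prop :=
  w ≠ [] ∧ ∀ s : List α, s <:+ w → s ≠ w → s ≠ [] → LexLtInv w s

/-!
Every nonempty proper suffix `s` of `w^(n+1) = w ++ w^n` either is a suffix of `w^n`, hence
`s ≤ w^n`, which is a proper prefix of `w^(n+1)`; or it is `t ++ w^n` with `t` a nonempty proper
suffix of `w`. In the latter case the anti-Lyndon property puts `w` before `t` in the inverse
lexicographic order; since `t` is shorter than `w`, this is decided at a first mismatch where `t`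
carries the smaller letter, so `t ++ w^n ≺ w ++ w^n`.
-/

namespace List

variable {α : Type*}

theorem lex_append_right_of_ne_nil {r : α → α → Prop} (s : List α) {t : List α} (ht : t ≠ []) :
    Lex r s (s ++ t) := by
  obtain ⟨a, t, rfl⟩ := exists_cons_of_ne_nil ht
  simpa using Lex.append_left r (Lex.nil : Lex r [] (a :: t)) s

theorem Lex.append_of_swap_of_not_prefix {r : α → α → Prop} {x y : List α}
    (h : Lex (fun a b => r b a) x y) (hxy : ¬ x <+: y) (c d : List α) :
    Lex r (y ++ c) (x ++ d) := by
  induction h with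
  | nil => exact absurd nil_prefix hxy
  | rel hab => exact Lex.rel hab
  | cons _ ih => exact Lex.cons (ih fun hp => hxy (cons_prefix_cons.mpr ⟨rfl, hp⟩))

theorem suffix_or_eq_append_of_suffix_append {s a b : List α} (h : s <:+ a ++ b) :
    s <:+ b ∨ ∃ t, t <:+ a ∧ s = t ++ b := by
  obtain ⟨u, hu⟩ := h
  rcases append_eq_append_iff.mp hu with ⟨t, rfl, rfl⟩ | ⟨v, rfl, rfl⟩
  · exact Or.inr ⟨t, suffix_append u t, rfl⟩
  · exact Or.inl (suffix_append v s)

theorem IsSuffix.not_prefix_of_ne {s w : List α} (hs : s <:+ w) (hne : s ≠ w) : ¬ w <+: s :=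
  fun hp => hne (hs.eq_of_length (le_antisymm hs.length_le hp.length_le))

end List

section

open List

variable {α : Type*} [LinearOrder α]

theorem IsAntiLyndonWord.lexLt_append_of_suffix {w : List α} (hw : IsAntiLyndonWord w)
    {t : List α} (ht : t <:+ w) (htw : t ≠ w) (ht0 : t ≠ []) (u : List α) :
    LexLt (t ++ u) (w ++ u) :=
  (hw.2 t ht htw ht0).append_of_swap_of_not_prefix (ht.not_prefix_of_ne htw) u u

theorem IsAntiLyndonWord.lexLt_of_suffix_flatten_replicate {w : List α}
    (hw : IsAntiLyndonWord w) (n : ℕ) {s : List α} (hs : s <:+ (replicate n w).flatten)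
    (hne : s ≠ (replicate n w).flatten) (hs0 : s ≠ []) :
    LexLt s (replicate n w).flatten := by
  induction n generalizing s with
  | zero => simp_all
  | succ n ih =>
    set p := (replicate n w).flatten
    have hcons : (replicate (n + 1) w).flatten = w ++ p := by simp [p, replicate_succ]
    have hsnoc : (replicate (n + 1) w).flatten = p ++ w := by simp [p, replicate_succ']
    have hp : LexLt p (replicate (n + 1) w).flatten :=
      hsnoc ▸ lex_append_right_of_ne_nil p hw.1
    have lexLt_of_suffix_p : ∀ s, s <:+ p → s ≠ [] →
        LexLt s (replicate (n + 1) w).flatten := by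
      intro s hsp hs0
      by_cases hsp' : s = p
      · exact hsp' ▸ hp
      · exact lex_trans (fun h₁ h₂ => lt_trans h₁ h₂) (ih hsp hsp' hs0) hp
    rw [hcons] at hs hne
    rcases suffix_or_eq_append_of_suffix_append hs with hsp | ⟨t, htw, rfl⟩
    · exact lexLt_of_suffix_p s hsp hs0
    · rcases eq_or_ne t [] with rfl | ht0
      · exact lexLt_of_suffix_p p (suffix_refl p) hs0
      · exact hcons ▸ hw.lexLt_append_of_suffix htw (by rintro rfl; exact hne rfl) ht0 p

end

theorem stmt17 {α : Type*} [LinearOrder α] (w : List α)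
    (hw : IsAntiLyndonWord w) :
    ∀ h : ℕ, 1 ≤ h → IsInvLyndonWord (List.replicate h w).flatten := by
  intro h hh
  refine ⟨?_, fun s hs hne hs0 => hw.lexLt_of_suffix_flatten_replicate h hs hne hs0⟩
  simp only [ne_eq, List.flatten_eq_nil_iff, List.mem_replicate]
  exact fun hnil => hw.1 (hnil w ⟨by omega, rfl⟩)
end

section
/- If ℓ_1 and ℓ_2 are anti-Lyndon words and ℓ_2 is a proper prefix of ℓ_1, then the concatenation ℓ_1 ℓ_2 is an inverse Lyndon word. -/
/-!
Write `ℓ₁ = ℓ₂ r` with `r` nonempty. A nonempty proper suffix `s` of an anti-Lyndon word `w` is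
shorter than `w`, so `w ≺_in s` must come from a mismatch where `s` has the smaller letter; hence
`s u ≺ w v` for all `u`, `v`. A nonempty proper suffix of `ℓ₁ ℓ₂ = ℓ₂ r ℓ₂` is either `ℓ₂`, a
proper prefix of it; or a proper suffix of `ℓ₂`; or `t ℓ₂` with `t` a nonempty proper suffix
of `ℓ₁`, and the last two are handled by the mismatch argument.
-/

namespace List

variable {α : Type*}

theorem Lex.self_append (r : α → α → Prop) (x : List α) {t : List α} (ht : t ≠ []) :
    Lex r x (x ++ t) := by
  simpa using Lex.append_left r ((lex_nil_or_eq_nil t).resolve_right ht) x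

theorem Lex.append_append_of_swap {r : α → α → Prop} {x y : List α}
    (h : Lex (fun a b => r b a) x y) (hlen : y.length < x.length) (u v : List α) :
    Lex r (y ++ u) (x ++ v) := by
  induction h with
  | nil => simp at hlen
  | cons _ ih => exact Lex.cons (ih (by simpa using hlen))
  | rel h => exact Lex.rel h

theorem suffix_append_cases {s l₁ l₂ : List α} (h : s <:+ l₁ ++ l₂) :
    s <:+ l₂ ∨ ∃ t, t <:+ l₁ ∧ s = t ++ l₂ := by
  obtain ⟨p, hp⟩ := h
  rcases append_eq_append_iff.mp hp with ⟨t, hl₁, hs⟩ | ⟨q, -, hl₂⟩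
  · exact Or.inr ⟨t, ⟨p, hl₁.symm⟩, hs⟩
  · exact Or.inl ⟨q, hl₂.symm⟩

end List

theorem IsAntiLyndonWord.lexLt_append_of_isSuffix {α : Type*} [LinearOrder α] {w s : List α}
    (hw : IsAntiLyndonWord w) (hs : s <:+ w) (hsw : s ≠ w) (hs₀ : s ≠ []) (u v : List α) :
    LexLt (s ++ u) (w ++ v) :=
  (hw.2 s hs hsw hs₀).append_append_of_swap
    (lt_of_le_of_ne hs.length_le (mt hs.eq_of_length hsw)) u v

theorem stmt18 {α : Type*} [LinearOrder α] (l1 l2 : List α)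
    (h1 : IsAntiLyndonWord l1) (h2 : IsAntiLyndonWord l2)
    (hpref : l2 <+: l1) (hne : l2 ≠ l1) :
    IsInvLyndonWord (l1 ++ l2) := by
  obtain ⟨r, rfl⟩ := hpref
  have hr : r ≠ [] := by rintro rfl; simp at hne
  have hw : l2 ++ r ++ l2 = l2 ++ (r ++ l2) := List.append_assoc l2 r l2
  have hl2 : LexLt l2 (l2 ++ r ++ l2) := hw ▸ List.Lex.self_append _ l2 (by simp [hr])
  refine ⟨by simp [h2.1], fun s hs hsw hs₀ => ?_⟩
  rcases List.suffix_append_cases hs with hs | ⟨t, ht, rfl⟩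
  · rcases eq_or_ne s l2 with rfl | hsl2
    · exact hl2
    · simpa [hw] using h2.lexLt_append_of_isSuffix hs hsl2 hs₀ [] (r ++ l2)
  · rcases eq_or_ne t [] with rfl | ht₀
    · exact hl2
    · exact h1.lexLt_append_of_isSuffix ht (by rintro rfl; exact hsw rfl) ht₀ l2 l2
end

section
/- A nonempty word w is an inverse Lyndon word if and only if w is a strict sesquipower of an anti-Lyndon word, i.e., w = (uv)^n u for some words u, v with v nonempty, n ≥ 1, and uv anti-Lyndon. -/
open List

section Lex

variable {α : Type*} {r : α → α → Prop} {x y : List α}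

def LexMismatch (r : α → α → Prop) (x y : List α) : Prop :=
  ∃ c a b, r a b ∧ c ++ [a] <+: x ∧ c ++ [b] <+: y

theorem LexMismatch.mono {x' y' : List α} (h : LexMismatch r x y) (hx : x <+: x')
    (hy : y <+: y') : LexMismatch r x' y' :=
  let ⟨c, a, b, hab, ha, hb⟩ := h
  ⟨c, a, b, hab, ha.trans hx, hb.trans hy⟩

theorem lexMismatch_swap : LexMismatch (fun a b => r b a) x y ↔ LexMismatch r y x :=
  ⟨fun ⟨c, a, b, hab, ha, hb⟩ => ⟨c, b, a, hab, hb, ha⟩,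
    fun ⟨c, a, b, hab, ha, hb⟩ => ⟨c, b, a, hab, hb, ha⟩⟩

theorem LexMismatch.lex (h : LexMismatch r x y) : Lex r x y := by
  obtain ⟨c, a, b, hab, ⟨x', rfl⟩, ⟨y', rfl⟩⟩ := h
  simpa using Lex.append_left r (Lex.rel hab) c

theorem List.IsPrefix.lex (h : x <+: y) (hne : x ≠ y) : Lex r x y := by
  obtain ⟨_ | ⟨b, k⟩, rfl⟩ := h
  · exact absurd (append_nil x).symm hne
  · simpa using Lex.append_left r (Lex.nil (a := b) (l := k)) x

theorem List.Lex.prefix_or_lexMismatch (h : Lex r x y) : x <+: y ∨ LexMismatch r x y := by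
  induction h with
  | nil => exact .inl nil_prefix
  | rel hab => exact .inr ⟨[], _, _, hab, by simp, by simp⟩
  | cons _ ih =>
    rcases ih with h | ⟨c, a, b, hab, ha, hb⟩
    · exact .inl ((prefix_cons_inj _).2 h)
    · exact .inr ⟨_ :: c, a, b, hab, (prefix_cons_inj _).2 ha, (prefix_cons_inj _).2 hb⟩

theorem List.Lex.of_append_left (hr : ∀ a, ¬ r a a) {l : List α} (h : Lex r (l ++ x) (l ++ y)) :
    Lex r x y := by
  induction l with
  | nil => exact h
  | cons a l ih => exact ih ((cons_lex_cons_iff.1 h).resolve_left (hr a)).2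

theorem lexMismatch_or_lexMismatch_of_not_prefix [LinearOrder α] (hxy : ¬ x <+: y)
    (hyx : ¬ y <+: x) : LexMismatch (· < ·) x y ∨ LexMismatch (· < ·) y x := by
  rcases lt_trichotomy x y with h | rfl | h
  · exact .inl ((Lex.prefix_or_lexMismatch h).resolve_left hxy)
  · exact absurd prefix_rfl hxy
  · exact .inr ((Lex.prefix_or_lexMismatch h).resolve_left hyx)

theorem LexMismatch.prefix_or_lexMismatch_of_prefix {t z w s u : List α} (h : LexMismatch r t z)
    (hzw : z <+: w) (hs : s <+: u) (ht : t <+: u) : s <+: w ∨ LexMismatch r s w := by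
  obtain ⟨c, a, b, hab, ha, hb⟩ := h
  rcases prefix_or_prefix_of_prefix (ha.trans ht) hs with hcs | hsc
  · exact .inr ⟨c, a, b, hab, hcs, hb.trans hzw⟩
  · rcases prefix_concat_iff.1 hsc with rfl | hsc
    · exact .inr ⟨c, a, b, hab, prefix_rfl, hb.trans hzw⟩
    · exact .inl ((hsc.trans (prefix_append _ _)).trans (hb.trans hzw))

end Lex

section Periodic

variable {α : Type*} {w z : List α}

theorem drop_prefix_or_prefix_drop_append (hz : z ≠ []) (h : w <+: z ++ w) (d : ℕ) :
    drop d w <+: w ∨ ∃ r, 0 < r ∧ r < z.length ∧ drop d w <+: drop r z ++ w := by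
  induction d using Nat.strong_induction_on with
  | _ d ih =>
  rcases Nat.eq_zero_or_pos d with rfl | hd
  · exact .inl prefix_rfl
  by_cases hdz : d < z.length
  · refine .inr ⟨d, hd, hdz, ?_⟩
    rw [← drop_append_of_le_length hdz.le]
    exact h.drop d
  · have hperiod : drop z.length w <+: w := by simpa using h.drop z.length
    have hshift : drop d w <+: drop (d - z.length) w := by
      have := hperiod.drop (d - z.length)
      rwa [drop_drop, Nat.add_sub_cancel' (not_lt.1 hdz)] at this
    rcases ih (d - z.length) (by have := length_pos_iff.2 hz; omega) with h' | ⟨r, hr, hrz, h'⟩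
    · exact .inl (hshift.trans h')
    · exact .inr ⟨r, hr, hrz, hshift.trans h'⟩

theorem exists_eq_flatten_replicate_append (hz : z ≠ []) (h : w <+: z ++ w) :
    ∃ n u, u <+: z ∧ u.length < z.length ∧ w = (replicate n z).flatten ++ u := by
  induction hl : w.length using Nat.strong_induction_on generalizing w with
  | _ l ih =>
  by_cases hlt : w.length < z.length
  · exact ⟨0, w, prefix_of_prefix_length_le h (prefix_append _ _) hlt.le, hlt, by simp⟩
  · obtain ⟨w', rfl⟩ := prefix_of_prefix_length_le (prefix_append _ _) h (not_lt.1 hlt)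
    have h' : w' <+: z ++ w' := (prefix_append_right_inj z).1 h
    obtain ⟨n, u, hu, hlen, rfl⟩ :=
      ih w'.length (by simp [← hl, length_pos_iff.2 hz]) h' rfl
    exact ⟨n + 1, u, hu, hlen, by simp [replicate_succ]⟩

theorem prefix_append_flatten_replicate_append {u : List α} (hu : u <+: z) (n : ℕ) :
    (replicate n z).flatten ++ u <+: z ++ ((replicate n z).flatten ++ u) := by
  have hcomm : z ++ (replicate n z).flatten = (replicate n z).flatten ++ z := by
    rw [← flatten_cons, ← replicate_succ, replicate_succ', flatten_append, flatten_singleton]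
  rw [← append_assoc, hcomm, append_assoc, prefix_append_right_inj]
  exact hu.trans (prefix_append _ _)

theorem exists_eq_flatten_replicate_append_iff {P : List α → Prop} :
    (∃ u v n, v ≠ [] ∧ 1 ≤ n ∧ P (u ++ v) ∧ w = (replicate n (u ++ v)).flatten ++ u) ↔
      ∃ z, z ≠ [] ∧ P z ∧ z <+: w ∧ w <+: z ++ w := by
  constructor
  · rintro ⟨u, v, _ | n, hv, hn, hP, rfl⟩
    · omega
    refine ⟨u ++ v, by simp [hv], hP, by simp [replicate_succ], ?_⟩
    exact prefix_append_flatten_replicate_append (prefix_append _ _) _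
  · rintro ⟨z, hz, hP, hzw, hwz⟩
    obtain ⟨n, u, ⟨v, rfl⟩, hlen, rfl⟩ := exists_eq_flatten_replicate_append hz hwz
    refine ⟨u, v, n, by rintro rfl; simp at hlen, ?_, hP, rfl⟩
    rcases n with _ | n
    · simpa using hzw.length_le.trans_lt hlen
    · omega

end Periodic

section Lyndon

variable {α : Type*} [LinearOrder α] {w z : List α}

theorem IsAntiLyndonWord.isInvLyndonWord (hz : IsAntiLyndonWord z) (hzw : z <+: w)
    (hwz : w <+: z ++ w) : IsInvLyndonWord w := by
  refine ⟨fun h => hz.1 (prefix_nil.1 (h ▸ hzw)), fun s hs hsw _ => ?_⟩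
  obtain ⟨d, rfl⟩ : ∃ d, s = drop d w := ⟨_, suffix_iff_eq_drop.1 hs⟩
  suffices drop d w <+: w ∨ LexMismatch (· < ·) (drop d w) w by
    rcases this with h | h
    · exact h.lex hsw
    · exact h.lex
  rcases drop_prefix_or_prefix_drop_append hz.1 hwz d with h | ⟨r, hr, hrz, h⟩
  · exact .inl h
  have hlen : (drop r z).length < z.length := by simp; omega
  have hlex : LexLtInv z (drop r z) :=
    hz.2 _ (drop_suffix r z) (fun h => (h ▸ hlen).false) (by simp; omega)
  have hmis : LexMismatch (· < ·) (drop r z) z :=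
    lexMismatch_swap.1 ((Lex.prefix_or_lexMismatch hlex).resolve_left
      fun h => (h.length_le.trans_lt hlen).false)
  exact hmis.prefix_or_lexMismatch_of_prefix hzw h (prefix_append _ _)

theorem IsInvLyndonWord.isAntiLyndonWord_of_shortest_period (hw : IsInvLyndonWord w)
    (hz : z ≠ []) (hzw : z <+: w) (hwz : w <+: z ++ w)
    (hmin : ∀ x, x <+: z → x ≠ [] → x ≠ z → ¬ w <+: x ++ w) : IsAntiLyndonWord z := by
  refine ⟨hz, fun t ht htz ht0 => ?_⟩
  obtain ⟨x, rfl⟩ := ht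
  obtain ⟨w', rfl⟩ := hzw
  have hx : x ≠ [] := by rintro rfl; exact htz rfl
  have hw' : w' <+: x ++ t ++ w' := (prefix_append_right_inj (x ++ t)).1 hwz
  have hs : LexLt (t ++ w') (x ++ t ++ w') :=
    hw.2 _ ⟨x, by simp⟩ (fun h => by simpa [hx] using congrArg length h) (by simp [ht0])
  have hnp : ¬ t ++ w' <+: x ++ t ++ w' := fun h =>
    hmin x (prefix_append _ _) hx (by simpa using ht0)
      (by simpa using (prefix_append_right_inj x).2 h)
  by_cases hb : t <+: x ++ t
  · exfalso
    obtain ⟨y, hy⟩ := hb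
    have hy0 : y ≠ [] := by
      rintro rfl; simpa [hx] using congrArg length hy
    rw [← hy] at hw hs hnp hw'
    have h1 : LexMismatch (· < ·) w' (y ++ w') :=
      (Lex.of_append_left lt_irrefl (l := t) (by rwa [append_assoc] at hs)).prefix_or_lexMismatch.resolve_left
        fun h => hnp (by simpa using h)
    have h2 : LexLt (t ++ y ++ w') (y ++ w') := (h1.mono hw' prefix_rfl).lex
    have h3 : LexLt (y ++ w') (t ++ y ++ w') :=
      hw.2 (y ++ w') ⟨t, by simp⟩ (fun h => by simpa [ht0] using congrArg length h) (by simp [hy0])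
    exact List.lt_asymm h2 h3
  · have hzt : ¬ x ++ t <+: t := fun h => by simpa [hx] using h.length_le
    rcases lexMismatch_or_lexMismatch_of_not_prefix hb hzt with h | h
    · exact (lexMismatch_swap.2 h).lex
    · exact absurd hs (List.lt_asymm (h.mono (prefix_append _ w') (prefix_append _ _)).lex)

theorem IsInvLyndonWord.exists_isAntiLyndonWord (hw : IsInvLyndonWord w) :
    ∃ z, z ≠ [] ∧ IsAntiLyndonWord z ∧ z <+: w ∧ w <+: z ++ w := by
  classical
  have hex : ∃ p, 0 < p ∧ w.HasPeriod p :=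
    ⟨w.length, length_pos_iff.2 hw.1, hasPeriod_of_length_le _ _ le_rfl⟩
  obtain ⟨hp, hper⟩ := Nat.find_spec hex
  have hz : take (Nat.find hex) w ≠ [] := by simp [hp.ne', hw.1]
  refine ⟨_, hz, hw.isAntiLyndonWord_of_shortest_period hz (take_prefix _ _) hper ?_,
    take_prefix _ _, hper⟩
  intro x hx hx0 hxz hwx
  have hlt : x.length < Nat.find hex :=
    (lt_of_le_of_ne hx.length_le (mt hx.eq_of_length hxz)).trans_le (length_take_le _ _)
  refine Nat.find_min hex hlt ⟨length_pos_iff.2 hx0, ?_⟩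
  rwa [HasPeriod, ← prefix_iff_eq_take.1 (hx.trans (take_prefix _ _))]

end Lyndon

theorem stmt19_general {α : Type*} [LinearOrder α] (w : List α) :
    IsInvLyndonWord w ↔
      ∃ (u v : List α) (n : ℕ), v ≠ [] ∧ 1 ≤ n ∧
        IsAntiLyndonWord (u ++ v) ∧
        w = (List.replicate n (u ++ v)).flatten ++ u := by
  rw [exists_eq_flatten_replicate_append_iff]
  exact ⟨IsInvLyndonWord.exists_isAntiLyndonWord,
    fun ⟨_, _, hz, hzw, hwz⟩ => hz.isInvLyndonWord hzw hwz⟩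

theorem stmt19 {α : Type*} [LinearOrder α] (w : List α) (hw : w ≠ []) :
    IsInvLyndonWord w ↔
      ∃ (u v : List α) (n : ℕ), v ≠ [] ∧ 1 ≤ n ∧
        IsAntiLyndonWord (u ++ v) ∧
        w = (List.replicate n (u ++ v)).flatten ++ u :=
  stmt19_general w
end
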